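/- arXiv:1212.5686 — 2 statements merged into one kernel-verified Lean document; each statement's English description precedes it below -/
import Mathlib

section
/- Let ρ be a zero proximate order that is twice differentiable on (0,∞)\{1} and satisfies ρ(1/r) = −ρ(r). Suppose V(r) → ∞ as r → ∞ and the function h(x) = log V(e^x) is concave on some neighborhood of +∞. Set γ(t) = sup_{r>0} V(rt)/V(r). Then there exists a constant M such that γ(t) ≤ M·V(t) for all t ≥ 1; moreover, if h is concave on all of (0,∞), then γ(t) = V(t) for all t ≥ 1. -/
open MeasureTheory Filter Topology Set
open scoped ENNReal

noncomputable section

/-- `V ρ r = r ^ ρ(r)`. -/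
def V (ρ : ℝ → ℝ) (r : ℝ) : ℝ := r ^ ρ r

/-- A proximate order (in the sense of Valiron) with limit `l` at infinity:
`ρ` is locally absolutely continuous on `(0,∞)`, `ρ(r) → l`, and
`r · log r · ρ'(r) → 0` as `r → ∞`. -/
structure IsProximateOrder (ρ : ℝ → ℝ) (l : ℝ) : Prop where
  locAC : ∀ a : ℝ, 0 < a → ∀ b : ℝ, a ≤ b →
    MeasureTheory.IntegrableOn (deriv ρ) (Set.Icc a b) ∧
      ∀ x ∈ Set.Icc a b, ρ x = ρ a + ∫ t in a..x, deriv ρ t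
  tendsto_lim : Filter.Tendsto ρ Filter.atTop (nhds l)
  tendsto_deriv : Filter.Tendsto (fun r => r * Real.log r * deriv ρ r) Filter.atTop (nhds 0)

/-- A zero proximate order: a proximate order with limit `0`, satisfying
`ρ(1/r) = -ρ(r)`, continuously differentiable on `(0,∞) \ {1}`, and such that
`V(r) = r ^ ρ(r)` extends continuously to `r = 1` with value `V(1) = 1`. -/
structure IsZeroProximateOrder (ρ : ℝ → ℝ) : Prop where
  proximate : IsProximateOrder ρ 0
  symm : ∀ r : ℝ, 0 < r → ρ r⁻¹ = -ρ r
  diffAway : ∀ x ∈ Set.Ioi (0:ℝ) \ {1}, DifferentiableAt ℝ ρ x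
  derivCont : ContinuousOn (deriv ρ) (Set.Ioi (0:ℝ) \ {1})
  V_one : Filter.Tendsto (V ρ) (nhdsWithin 1 (Set.Ioi (0:ℝ) \ {1})) (nhds 1)

/-- `γ(t) = sup_{r>0} V(rt)/V(r)` (zero proximate order case). -/
noncomputable def gamma0 (ρ : ℝ → ℝ) (t : ℝ) : ℝ :=
  sSup {y : ℝ | ∃ r : ℝ, 0 < r ∧ y = V ρ (r * t) / V ρ r}

/-!
Write `h(x) = log V(eˣ)`, so that `V(rt)/V(r) = exp (h(log r + log t) - h(log r))`; the
bound `γ(t) ≤ M·V(t)` amounts to `h(x + y) ≤ h(x) + h(y) + C`. The symmetry `ρ(1/r) = -ρ(r)`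
makes `h` even, and `V(r) → ∞` makes a function concave near `+∞` nondecreasing there. For an
even `h` it suffices to compare `h` on `[0, ∞)` with a nondecreasing concave `ψ`, since then
`ψ(|x + y|) ≤ ψ(|x| + |y|) ≤ ψ(|x|) + ψ(|y|) - ψ(0)`. We take `ψ(y) = h(A + y)`, which stays at
bounded distance from `h` by concavity. If `h` is concave on all of `(0, ∞)` we take `ψ = h`
and get exact subadditivity, so the supremum defining `γ(t)` is attained at `r = 1`.
-/

open Real

theorem ConcaveOn.add_le_add_of_le {s : Set ℝ} {f : ℝ → ℝ} (hf : ConcaveOn ℝ s f) {a b t : ℝ}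
    (ha : a ∈ s) (hbt : b + t ∈ s) (hab : a ≤ b) (ht : 0 ≤ t) :
    f a + f (b + t) ≤ f (a + t) + f b := by
  rcases (show a ≤ b + t by linarith).eq_or_lt with hdeg | _
  · obtain rfl : t = 0 := by linarith
    obtain rfl : b = a := by linarith
    simp
  have hd : b + t - a ≠ 0 := by linarith
  have hl : 0 ≤ (b - a) / (b + t - a) := div_nonneg (by linarith) (by linarith)
  have hm : 0 ≤ t / (b + t - a) := div_nonneg ht (by linarith)
  have hsum : (b - a) / (b + t - a) + t / (b + t - a) = 1 := by field_simp; ring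
  -- `a + t` and `b` are the two mirror-image convex combinations of `a` and `b + t`
  have h₁ := hf.2 ha hbt hl hm hsum
  have h₂ := hf.2 ha hbt hm hl (by rw [add_comm, hsum])
  have e₁ : ((b - a) / (b + t - a)) • a + (t / (b + t - a)) • (b + t) = a + t := by
    simp only [smul_eq_mul]; field_simp; ring
  have e₂ : (t / (b + t - a)) • a + ((b - a) / (b + t - a)) • (b + t) = b := by
    simp only [smul_eq_mul]; field_simp; ring
  rw [e₁] at h₁
  rw [e₂] at h₂
  simp only [smul_eq_mul] at h₁ h₂
  linear_combination h₁ + h₂ - (f a + f (b + t)) * hsum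

theorem ConcaveOn.monotoneOn_of_tendsto_atTop {s : Set ℝ} {f : ℝ → ℝ} (hf : ConcaveOn ℝ s f)
    (hs : IsUpperSet s) (hT : Tendsto f atTop atTop) : MonotoneOn f s := by
  intro x hx y hy hxy
  rcases hxy.eq_or_lt with rfl | hlt
  · rfl
  by_contra! hyx
  obtain ⟨z, hfz, hz⟩ := ((hT.eventually_gt_atTop (f y)).and (eventually_gt_atTop y)).exists
  exact lt_asymm hfz (hf.strictAntiOn hx hlt hyx ⟨hy, self_mem_Ici⟩ ⟨hs hz.le hy, hz.le⟩ hz)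

theorem ConcaveOn.concaveOn_Ici_of_Ioi {f : ℝ → ℝ} {a : ℝ} (hf : ConcaveOn ℝ (Ioi a) f)
    (hc : ContinuousOn f (Ici a)) : ConcaveOn ℝ (Ici a) f := by
  refine ⟨convex_Ici a, fun x hx y hy p q hp hq hpq => ?_⟩
  have shift : ∀ z ∈ Ici a, Tendsto (fun ε => f (z + ε)) (𝓝[>] 0) (𝓝 (f z)) := by
    intro z hz
    refine (hc z hz).tendsto.comp (tendsto_nhdsWithin_iff.2 ⟨?_, ?_⟩)
    · simpa using ((continuous_const_add z).tendsto 0).mono_left nhdsWithin_le_nhds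
    · filter_upwards [self_mem_nhdsWithin] with ε (hε : 0 < ε)
      exact le_add_of_le_of_nonneg hz hε.le
  refine le_of_tendsto_of_tendsto (((shift x hx).const_mul p).add ((shift y hy).const_mul q))
    (shift _ (convex_Ici a hx hy hp hq hpq)) ?_
  filter_upwards [self_mem_nhdsWithin] with ε (hε : 0 < ε)
  have hshift := hf.2 (show a < x + ε by linarith [mem_Ici.1 hx])
    (show a < y + ε by linarith [mem_Ici.1 hy]) hp hq hpq
  simp only [smul_eq_mul] at hshift ⊢
  convert hshift using 2
  linear_combination (-ε) * hpq

theorem Function.Even.map_add_le_of_abs_sub_le {g ψ : ℝ → ℝ} {K : ℝ} (hg : Function.Even g)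
    (hψ : ConcaveOn ℝ (Ici 0) ψ) (hψm : MonotoneOn ψ (Ici 0))
    (hK : ∀ y, 0 ≤ y → |g y - ψ y| ≤ K) (x y : ℝ) :
    g (x + y) ≤ g x + g y + (3 * K - ψ 0) := by
  have habs : ∀ z, g |z| = g z := fun z => by
    rcases abs_choice z with h | h <;> rw [h]
    exact hg z
  have hsub : ψ 0 + ψ (|x| + |y|) ≤ ψ (0 + |y|) + ψ |x| :=
    hψ.add_le_add_of_le self_mem_Ici (mem_Ici.2 (by positivity)) (abs_nonneg x) (abs_nonneg y)
  have hmono : ψ |x + y| ≤ ψ (|x| + |y|) :=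
    hψm (mem_Ici.2 (abs_nonneg _)) (mem_Ici.2 (by positivity)) (abs_add_le x y)
  have hxy := abs_le.1 (hK |x + y| (abs_nonneg _))
  have hx := abs_le.1 (hK |x| (abs_nonneg _))
  have hy := abs_le.1 (hK |y| (abs_nonneg _))
  rw [habs] at hx hy hxy
  rw [zero_add] at hsub
  linarith

theorem Function.Even.exists_map_add_le_of_concaveOn_Ici {g : ℝ → ℝ} {A : ℝ}
    (hg : Function.Even g) (hcont : Continuous g) (hT : Tendsto g atTop atTop)
    (hconc : ConcaveOn ℝ (Ici A) g) : ∃ C, ∀ x y, g (x + y) ≤ g x + g y + C := by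
  set B := max A 0
  have hB₀ : 0 ≤ B := le_max_right _ _
  have hconcB : ConcaveOn ℝ (Ici B) g :=
    hconc.subset (Ici_subset_Ici.2 (le_max_left _ _)) (convex_Ici _)
  have hmono := hconcB.monotoneOn_of_tendsto_atTop (isUpperSet_Ici B) hT
  have hψ : ConcaveOn ℝ (Ici 0) (fun y => g (B + y)) := by
    have := hconcB.translate_right B
    rwa [preimage_const_add_Ici, sub_self] at this
  have hψm : MonotoneOn (fun y => g (B + y)) (Ici 0) := fun y (hy : 0 ≤ y) z (hz : 0 ≤ z) hyz =>
    hmono (show B ≤ B + y by linarith) (show B ≤ B + z by linarith) (by linarith)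
  obtain ⟨K₀, hK₀⟩ := (isCompact_Icc (a := 0) (b := B)).exists_bound_of_continuousOn
    (f := fun y => g y - g (B + y)) (by fun_prop)
  refine ⟨_, hg.map_add_le_of_abs_sub_le hψ hψm (K := max K₀ (g (B + B) - g B)) fun y hy => ?_⟩
  rcases le_total y B with hyB | hBy
  · exact (hK₀ y ⟨hy, hyB⟩).trans (le_max_left _ _)
  · have hle : g y ≤ g (B + y) := hmono hBy (show B ≤ B + y by linarith) (by linarith)
    have hinc := hconcB.add_le_add_of_le self_mem_Ici (show B ≤ y + B by linarith) hBy hB₀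
    rw [add_comm y B] at hinc
    rw [abs_sub_comm, abs_of_nonneg (sub_nonneg.2 hle)]
    exact le_max_of_le_right (by linarith)

-- the function `h` of the paper
def logV (ρ : ℝ → ℝ) (x : ℝ) : ℝ := Real.log (V ρ (Real.exp x))

section logV

variable {ρ : ℝ → ℝ}

theorem V_pos (ρ : ℝ → ℝ) {r : ℝ} (hr : 0 < r) : 0 < V ρ r := rpow_pos_of_pos hr _

theorem logV_eq (ρ : ℝ → ℝ) (x : ℝ) : logV ρ x = x * ρ (exp x) := by
  rw [logV, V, log_rpow (exp_pos x), log_exp, mul_comm]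

theorem V_eq_exp_logV_log (ρ : ℝ → ℝ) {r : ℝ} (hr : 0 < r) : V ρ r = exp (logV ρ (log r)) := by
  rw [logV, exp_log hr, exp_log (V_pos ρ hr)]

theorem logV_even (hsymm : ∀ r : ℝ, 0 < r → ρ r⁻¹ = -ρ r) : Function.Even (logV ρ) := by
  intro x
  rw [logV_eq, logV_eq, exp_neg, hsymm _ (exp_pos x)]
  ring

theorem continuous_logV (h : IsZeroProximateOrder ρ) : Continuous (logV ρ) := by
  rw [continuous_iff_continuousAt]
  intro x
  rcases eq_or_ne x 0 with rfl | hx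
  · have hexp : Tendsto exp (𝓝[≠] 0) (𝓝[Ioi 0 \ {1}] 1) := by
      refine tendsto_nhdsWithin_iff.2 ⟨?_, ?_⟩
      · simpa using (continuous_exp.tendsto 0).mono_left nhdsWithin_le_nhds
      · filter_upwards [self_mem_nhdsWithin] with y (hy : y ≠ 0)
        exact ⟨exp_pos y, by simpa using hy⟩
    have hlog := (continuousAt_log one_ne_zero).tendsto.comp (h.V_one.comp hexp)
    rw [log_one] at hlog
    rw [← continuousWithinAt_compl_self, ContinuousWithinAt, logV_eq, zero_mul]
    exact hlog
  · have hρ : ContinuousAt ρ (exp x) :=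
      (h.diffAway _ ⟨exp_pos x, by simpa using hx⟩).continuousAt
    rw [show logV ρ = fun x => x * ρ (exp x) from funext (logV_eq ρ)]
    exact continuousAt_id.mul (hρ.comp continuous_exp.continuousAt)

theorem tendsto_logV_atTop (hV : Tendsto (V ρ) atTop atTop) : Tendsto (logV ρ) atTop atTop :=
  tendsto_log_atTop.comp (hV.comp tendsto_exp_atTop)

theorem V_mul_div_le {C t r : ℝ} (hC : ∀ x y, logV ρ (x + y) ≤ logV ρ x + logV ρ y + C)
    (hr : 0 < r) (ht : 0 < t) : V ρ (r * t) / V ρ r ≤ exp C * V ρ t := by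
  rw [V_eq_exp_logV_log ρ (mul_pos hr ht), V_eq_exp_logV_log ρ hr, V_eq_exp_logV_log ρ ht,
    log_mul hr.ne' ht.ne', ← exp_sub, ← exp_add]
  exact exp_le_exp.2 (by linarith [hC (log r) (log t)])

theorem gamma0_le {C t : ℝ} (hC : ∀ x y, logV ρ (x + y) ≤ logV ρ x + logV ρ y + C)
    (ht : 0 < t) : gamma0 ρ t ≤ exp C * V ρ t :=
  csSup_le ⟨_, 1, one_pos, rfl⟩ fun _ ⟨_, hr, hy⟩ => hy ▸ V_mul_div_le hC hr ht

theorem gamma0_eq {t : ℝ} (hsub : ∀ x y, logV ρ (x + y) ≤ logV ρ x + logV ρ y) (ht : 0 < t) :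
    gamma0 ρ t = V ρ t := by
  have hC : ∀ x y, logV ρ (x + y) ≤ logV ρ x + logV ρ y + 0 := by simpa using hsub
  refine le_antisymm (by simpa using gamma0_le hC ht)
    (le_csSup ⟨exp 0 * V ρ t, ?_⟩ ⟨1, one_pos, ?_⟩)
  · exact fun _ ⟨_, hr, hy⟩ => hy ▸ V_mul_div_le hC hr ht
  · simp [V]

end logV

theorem statement3_general (ρ : ℝ → ℝ) (h : IsZeroProximateOrder ρ)
    (hV : Filter.Tendsto (V ρ) Filter.atTop Filter.atTop)
    (hconc : ∃ A : ℝ, ConcaveOn ℝ (Set.Ici A) (fun x => Real.log (V ρ (Real.exp x)))) :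
    (∃ M : ℝ, ∀ t : ℝ, 1 ≤ t → gamma0 ρ t ≤ M * V ρ t) ∧
    (ConcaveOn ℝ (Set.Ioi (0:ℝ)) (fun x => Real.log (V ρ (Real.exp x))) →
      ∀ t : ℝ, 1 ≤ t → gamma0 ρ t = V ρ t) := by
  have heven := logV_even h.symm
  have hcont := continuous_logV h
  have hT := tendsto_logV_atTop hV
  constructor
  · obtain ⟨A, hA⟩ := hconc
    obtain ⟨C, hC⟩ := heven.exists_map_add_le_of_concaveOn_Ici hcont hT hA
    exact ⟨exp C, fun t ht => gamma0_le hC (one_pos.trans_le ht)⟩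
  · intro hconc₀ t ht
    have hconcIci : ConcaveOn ℝ (Ici 0) (logV ρ) := hconc₀.concaveOn_Ici_of_Ioi hcont.continuousOn
    have hmono := hconcIci.monotoneOn_of_tendsto_atTop (isUpperSet_Ici 0) hT
    have hzero : logV ρ 0 = 0 := by rw [logV_eq, zero_mul]
    refine gamma0_eq (fun x y => ?_) (one_pos.trans_le ht)
    simpa [hzero] using heven.map_add_le_of_abs_sub_le hconcIci hmono (K := 0) (by simp) x y

/-- Theorem 2.6: let `ρ` be a zero proximate order, twice
differentiable on `(0,∞) \ {1}` (with `ρ(1/r) = -ρ(r)`), let `V(r) → ∞` as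
`r → ∞`, and let `h(x) = log V(eˣ)` be concave on a neighborhood of `+∞`.
Then `γ(t) ≤ M·V(t)` for `t ≥ 1` and some constant `M`; and if `h` is concave
on all of `(0,∞)`, then `γ(t) = V(t)` for `t ≥ 1`. -/
theorem statement3 (ρ : ℝ → ℝ) (h : IsZeroProximateOrder ρ)
    (htwice : ∀ x ∈ Set.Ioi (0:ℝ) \ {1}, DifferentiableAt ℝ (deriv ρ) x)
    (hV : Filter.Tendsto (V ρ) Filter.atTop Filter.atTop)
    (hconc : ∃ A : ℝ, ConcaveOn ℝ (Set.Ici A) (fun x => Real.log (V ρ (Real.exp x)))) :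
    (∃ M : ℝ, ∀ t : ℝ, 1 ≤ t → gamma0 ρ t ≤ M * V ρ t) ∧
    (ConcaveOn ℝ (Set.Ioi (0:ℝ)) (fun x => Real.log (V ρ (Real.exp x))) →
      ∀ t : ℝ, 1 ≤ t → gamma0 ρ t = V ρ t) :=
  statement3_general ρ h hV hconc

end
end

section
/- Let ρ be a proximate order with limit ρ∞, let μ ∈ 𝔐_∞(ρ), let tₙ → ∞ be a sequence such that μ_{tₙ} converges widely to ν, and let τₙ be a sequence converging to a number τ > 0. Then μ_{τₙ tₙ} converges widely to ν_τ, where ν_τ(E) = ν(τE)/τ^{ρ∞}. -/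
open MeasureTheory Filter Topology Set
open scoped ENNReal

noncomputable section

/-- A (real or complex) Radon measure on `(0,∞)`, given in polar form: its
total variation `var` (a positive Borel measure, finite on compact subsets of
`(0,∞)` and concentrated on `(0,∞)`) together with a measurable, a.e.
unimodular direction density `dir`, so that `dμ = dir · d var`. -/
structure RadonC where
  var : Measure ℝ
  dir : ℝ → ℂ
  measurable_dir : Measurable dir
  unimodular : ∀ᵐ x ∂var, ‖dir x‖ = 1
  locFin : ∀ a b : ℝ, 0 < a → var (Set.Icc a b) < ⊤
  conc : var (Set.Iic 0) = 0

/-- Value of the measure on a set: `μ(E) = ∫_E dir d var`. -/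
def RadonC.set (μ : RadonC) (E : Set ℝ) : ℂ := ∫ x in E, μ.dir x ∂μ.var

/-- Integral of a real function against the measure. -/
def RadonC.testInt (μ : RadonC) (f : ℝ → ℝ) : ℂ := ∫ x, (f x : ℂ) * μ.dir x ∂μ.var

/-- Test functions: continuous with compact support contained in `(0,∞)`. -/
def IsTest (f : ℝ → ℝ) : Prop :=
  Continuous f ∧ HasCompactSupport f ∧ tsupport f ⊆ Set.Ioi 0

/-- `∫ f dμ_t`, where `μ_t(E) = μ(tE)/V(t)`. -/
def scaledTestInt (ρ : ℝ → ℝ) (μ : RadonC) (t : ℝ) (f : ℝ → ℝ) : ℂ :=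
  (V ρ t : ℂ)⁻¹ * ∫ x, (f (x / t) : ℂ) * μ.dir x ∂μ.var

/-- Wide convergence of the scalings `μ_{t n}` to `ν`. -/
def WideTendsto (ρ : ℝ → ℝ) (μ : RadonC) (t : ℕ → ℝ) (ν : RadonC) : Prop :=
  ∀ f : ℝ → ℝ, IsTest f →
    Filter.Tendsto (fun n => scaledTestInt ρ μ (t n) f) Filter.atTop (nhds (ν.testInt f))

/-- The Azarin limit set `Fr[μ]` of `μ` relative to the proximate order `ρ`. -/
def AzarinSet (ρ : ℝ → ℝ) (μ : RadonC) : Set RadonC :=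
  {ν | ∃ t : ℕ → ℝ, Filter.Tendsto t Filter.atTop Filter.atTop ∧ WideTendsto ρ μ t ν}

/-- `μ ∈ 𝔐_∞(ρ)` : `sup_{r ≥ 1} |μ|([r, e r])/V(r) < ∞`. -/
def MemMInfty (ρ : ℝ → ℝ) (μ : RadonC) : Prop :=
  ∃ C : ℝ, ∀ r : ℝ, 1 ≤ r → μ.var (Set.Icc r (Real.exp 1 * r)) ≤ ENNReal.ofReal (C * V ρ r)

/-- Equality of Radon measures on `(0,∞)` (tested against test functions). -/
def WideEq (ν₁ ν₂ : RadonC) : Prop := ∀ f : ℝ → ℝ, IsTest f → ν₁.testInt f = ν₂.testInt f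

/-!
Since `μ_{τ t} = (V(τ t)/V(t))⁻¹ · (μ_t rescaled by τ)`, two facts suffice.
For a proximate order, `V(τₙ tₙ)/V(tₙ) → τ^{ρ∞}`: writing the ratio as
`exp (ρ(τₙtₙ) log τₙ + (ρ(τₙtₙ) - ρ(tₙ)) log tₙ)`, the second term tends to `0` because
`|ρ'(x)| ≤ o(1)/(x log x)`. And for `μ ∈ 𝔐_∞(ρ)`, covering `[a t, b t]` by finitely many
intervals `[r, e r]` shows `|μ|([a t, b t]) = O(V(t))`, so the measures `μ_t` are uniformly
bounded on test functions supported in a fixed `[a, b]`; hence replacing `f(·/τₙ)` by its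
uniform limit `f(·/τ)` changes `∫ f(·/τₙ) dμ_{tₙ}` only by `o(1)`.
-/

open scoped NNReal

lemma tendsto_zero_of_eventually_norm_le_mul {α E : Type*} [SeminormedAddCommGroup E]
    {L : Filter α} {u : α → E} (K : ℝ) (h : ∀ ε > 0, ∀ᶠ n in L, ‖u n‖ ≤ K * ε) :
    Tendsto u L (𝓝 0) := by
  rw [NormedAddGroup.tendsto_nhds_zero]
  intro ε hε
  have hK : 0 < |K| + 1 := by positivity
  filter_upwards [h (ε / (|K| + 1)) (by positivity)] with n hn
  calc ‖u n‖ ≤ K * (ε / (|K| + 1)) := hn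
    _ ≤ |K| * (ε / (|K| + 1)) := by gcongr; exact le_abs_self K
    _ < (|K| + 1) * (ε / (|K| + 1)) := by gcongr; linarith
    _ = ε := mul_div_cancel₀ ε hK.ne'

lemma log_le_two_mul_log_mul {c s : ℝ} (hc : 0 < c) (hs : 0 < s) (h : 1 ≤ c ^ 2 * s) :
    Real.log s ≤ 2 * Real.log (c * s) := by
  have := Real.log_nonneg h
  rw [Real.log_mul (by positivity) hs.ne', Real.log_pow] at this
  rw [Real.log_mul hc.ne' hs.ne']
  push_cast at this
  linarith

namespace IsProximateOrder

variable {ρ : ℝ → ℝ} {l : ℝ}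

lemma abs_sub_le (h : IsProximateOrder ρ l) {p q C : ℝ} (hp : 0 < p) (hq : 0 < q)
    (hC : ∀ x ∈ uIcc p q, |deriv ρ x| ≤ C) : |ρ q - ρ p| ≤ C * |q - p| := by
  wlog hpq : p ≤ q generalizing p q
  · rw [abs_sub_comm, abs_sub_comm q]
    exact this hq hp (by rwa [uIcc_comm]) (le_of_not_ge hpq)
  have hρ : ρ q - ρ p = ∫ x in p..q, deriv ρ x := by
    rw [(h.locAC p hp q hpq).2 q ⟨hpq, le_rfl⟩]; ring
  rw [hρ]
  exact intervalIntegral.norm_integral_le_of_norm_le_const fun x hx =>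
    (Real.norm_eq_abs _).trans_le (hC x (uIoc_subset_uIcc hx))

lemma eventually_abs_deriv_le (h : IsProximateOrder ρ l) {ε : ℝ} (hε : 0 < ε) :
    ∀ᶠ x in atTop, |deriv ρ x| ≤ ε / (x * Real.log x) := by
  filter_upwards [(Metric.tendsto_nhds.1 h.tendsto_deriv) ε hε, eventually_gt_atTop 1]
    with x hx hx1
  have hpos : 0 < x * Real.log x := mul_pos (by linarith) (Real.log_pos hx1)
  rw [Real.dist_eq, sub_zero, abs_mul, abs_of_pos hpos] at hx
  rw [le_div_iff₀ hpos]
  linarith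

variable {α : Type*} {L : Filter α} {t τ : α → ℝ} {τ₀ : ℝ}

lemma tendsto_sub_mul_log (h : IsProximateOrder ρ l) (ht : Tendsto t L atTop)
    (hτ : Tendsto τ L (𝓝 τ₀)) (hτ₀ : 0 < τ₀) :
    Tendsto (fun n => (ρ (τ n * t n) - ρ (t n)) * Real.log (t n)) L (𝓝 0) := by
  set c := min 1 (τ₀ / 2)
  have hc : 0 < c := lt_min one_pos (half_pos hτ₀)
  have hc1 : c ≤ 1 := min_le_left _ _
  -- Between `t` and `τ t` we have `x log x ≥ c t log (c t) ≥ c t log t / 2`.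
  refine tendsto_zero_of_eventually_norm_le_mul (2 * (2 * τ₀ + 1) / c) fun ε hε => ?_
  obtain ⟨R, hR⟩ := eventually_atTop.1 (h.eventually_abs_deriv_le hε)
  filter_upwards [hτ.eventually (Ioo_mem_nhds (half_lt_self hτ₀) (by linarith : τ₀ < 2 * τ₀)),
    (ht.const_mul_atTop hc).eventually_ge_atTop R,
    (ht.const_mul_atTop (pow_pos hc 2)).eventually_ge_atTop 2] with n ⟨hτl, hτu⟩ hRn h2
  set s := t n
  have hs : 0 < s := by nlinarith
  have hcs : 1 < c * s := by nlinarith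
  have hlog_cs : 0 < Real.log (c * s) := Real.log_pos hcs
  have hlog_s : 0 ≤ Real.log s := Real.log_nonneg (by nlinarith)
  have hlog : Real.log s ≤ 2 * Real.log (c * s) := log_le_two_mul_log_mul hc hs (by linarith)
  have hcτ : c ≤ τ n := (min_le_right _ _).trans hτl.le
  have hderiv : ∀ x ∈ uIcc s (τ n * s), |deriv ρ x| ≤ ε / (c * s * Real.log (c * s)) := by
    intro x hx
    have hcx : c * s ≤ x := (le_min (mul_le_of_le_one_left hs.le hc1)
      (mul_le_mul_of_nonneg_right hcτ hs.le)).trans hx.1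
    calc |deriv ρ x| ≤ ε / (x * Real.log x) := hR x (hRn.trans hcx)
      _ ≤ ε / (c * s * Real.log (c * s)) := by
        gcongr
        linarith
  have hτ1 : |τ n - 1| ≤ 2 * τ₀ + 1 := by rw [abs_le]; constructor <;> linarith
  calc ‖(ρ (τ n * s) - ρ s) * Real.log s‖ = |ρ (τ n * s) - ρ s| * Real.log s := by
        rw [Real.norm_eq_abs, abs_mul, abs_of_nonneg hlog_s]
    _ ≤ ε / (c * s * Real.log (c * s)) * |τ n * s - s| * (2 * Real.log (c * s)) := by
        gcongr
        exact h.abs_sub_le hs (by nlinarith) hderiv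
    _ = 2 * |τ n - 1| / c * ε := by
        rw [← sub_one_mul, abs_mul, abs_of_pos hs]
        field_simp
    _ ≤ 2 * (2 * τ₀ + 1) / c * ε := by gcongr

lemma tendsto_V_mul_div (h : IsProximateOrder ρ l) (ht : Tendsto t L atTop)
    (hτ : Tendsto τ L (𝓝 τ₀)) (hτ₀ : 0 < τ₀) :
    Tendsto (fun n => V ρ (τ n * t n) / V ρ (t n)) L (𝓝 (τ₀ ^ l)) := by
  have hτt : Tendsto (fun n => τ n * t n) L atTop := hτ.pos_mul_atTop hτ₀ ht
  have hexp : Tendsto (fun n => ρ (τ n * t n) * Real.log (τ n)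
      + (ρ (τ n * t n) - ρ (t n)) * Real.log (t n)) L (𝓝 (l * Real.log τ₀)) := by
    simpa using ((h.tendsto_lim.comp hτt).mul
      ((Real.continuousAt_log hτ₀.ne').tendsto.comp hτ)).add (h.tendsto_sub_mul_log ht hτ hτ₀)
  rw [Real.rpow_def_of_pos hτ₀, mul_comm]
  refine ((Real.continuous_exp.tendsto _).comp hexp).congr' ?_
  filter_upwards [hτ.eventually (lt_mem_nhds hτ₀), ht.eventually_gt_atTop 0] with n hτn htn
  rw [Function.comp_apply, V, V, Real.rpow_def_of_pos (mul_pos hτn htn),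
    Real.rpow_def_of_pos htn, ← Real.exp_sub, Real.log_mul hτn.ne' htn.ne']
  ring_nf

end IsProximateOrder

lemma support_comp_div_subset_Icc {f : ℝ → ℝ} {A B s : ℝ} (hs : 0 < s)
    (hf : Function.support f ⊆ Icc A B) :
    Function.support (fun x => f (x / s)) ⊆ Icc (A * s) (B * s) := fun x hx => by
  obtain ⟨h1, h2⟩ := hf hx
  exact ⟨(le_div_iff₀ hs).1 h1, (div_le_iff₀ hs).1 h2⟩

lemma HasCompactSupport.tendstoUniformly_comp_div {α : Type*} {L : Filter α} {f : ℝ → ℝ}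
    (hfc : HasCompactSupport f) (hf : Continuous f) {τ : α → ℝ} {τ₀ : ℝ}
    (hτ : Tendsto τ L (𝓝 τ₀)) (hτ₀ : 0 < τ₀) :
    TendstoUniformly (fun n y => f (y / τ n)) (fun y => f (y / τ₀)) L := by
  obtain ⟨R, hR, hfR⟩ := hfc.isCompact.isBounded.subset_closedBall_lt 0 0
  have hzero : ∀ z, R < |z| → f z = 0 := fun z hz =>
    image_eq_zero_of_notMem_tsupport fun hmem => by
      have := hfR hmem
      rw [Metric.mem_closedBall, dist_zero_right, Real.norm_eq_abs] at this
      linarith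
  rw [Metric.tendstoUniformly_iff]
  intro ε hε
  obtain ⟨δ, hδ, hfδ⟩ :=
    Metric.uniformContinuous_iff.1 (hfc.uniformContinuous_of_continuous hf) ε hε
  filter_upwards [hτ.eventually (Ioo_mem_nhds (half_lt_self hτ₀) (by linarith : τ₀ < 2 * τ₀)),
    (hτ.inv₀ hτ₀.ne').eventually (Metric.ball_mem_nhds _ (by positivity : 0 < δ / (2 * R * τ₀)))]
    with n ⟨hτl, hτu⟩ hinv y
  have hτn : 0 < τ n := by linarith
  by_cases hy : |y| ≤ 2 * R * τ₀
  · apply hfδ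
    rw [Real.dist_eq] at hinv
    calc dist (y / τ₀) (y / τ n) = |y| * |(τ n)⁻¹ - τ₀⁻¹| := by
          rw [Real.dist_eq, ← abs_mul, abs_sub_comm]; ring_nf
      _ ≤ 2 * R * τ₀ * |(τ n)⁻¹ - τ₀⁻¹| := by gcongr
      _ < 2 * R * τ₀ * (δ / (2 * R * τ₀)) := by gcongr
      _ = δ := mul_div_cancel₀ δ (by positivity)
  · push Not at hy
    rw [hzero (y / τ₀), hzero (y / τ n), dist_self]
    · exact hε
    · rw [abs_div, abs_of_pos hτn, lt_div_iff₀ hτn]; nlinarith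
    · rw [abs_div, abs_of_pos hτ₀, lt_div_iff₀ hτ₀]; nlinarith

namespace IsTest

variable {f : ℝ → ℝ}

lemma exists_support_subset_Icc (hf : IsTest f) :
    ∃ a b : ℝ, 0 < a ∧ a ≤ b ∧ Function.support f ⊆ Icc a b := by
  rcases (tsupport f).eq_empty_or_nonempty with he | hne
  · exact ⟨1, 1, one_pos, le_rfl, by simp [tsupport_eq_empty_iff.1 he]⟩
  · have hK : IsCompact (tsupport f) := hf.2.1
    refine ⟨sInf (tsupport f), sSup (tsupport f), hf.2.2 (hK.sInf_mem hne),
      csInf_le_csSup hne hK.bddBelow hK.bddAbove, fun x hx => ?_⟩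
    have hx' := subset_tsupport f hx
    exact ⟨csInf_le hK.bddBelow hx', le_csSup hK.bddAbove hx'⟩

lemma comp_div (hf : IsTest f) {s : ℝ} (hs : 0 < s) : IsTest (fun x => f (x / s)) := by
  refine ⟨hf.1.comp (continuous_id.div_const s), ?_, ?_⟩
  · simpa [div_eq_inv_mul] using hf.2.1.comp_smul (inv_ne_zero hs.ne')
  · refine (tsupport_comp_subset_preimage f (continuous_id.div_const s)).trans fun x hx => ?_
    exact (div_pos_iff_of_pos_right hs).1 (hf.2.2 hx)

end IsTest

namespace RadonC

variable (μ : RadonC) {f g : ℝ → ℝ} {A B ε : ℝ}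

lemma integrable_indicator_const (hA : 0 < A) (c : ℝ) :
    Integrable ((Icc A B).indicator fun _ => c) μ.var :=
  (integrable_indicator_iff measurableSet_Icc).2 (integrableOn_const (μ.locFin A B hA).ne)

lemma ae_norm_le_indicator (hf : Function.support f ⊆ Icc A B) (hε : ∀ y, |f y| ≤ ε) :
    ∀ᵐ x ∂μ.var, ‖(f x : ℂ) * μ.dir x‖ ≤ (Icc A B).indicator (fun _ => ε) x := by
  filter_upwards [μ.unimodular] with x hx
  rw [norm_mul, hx, mul_one, Complex.norm_real, Real.norm_eq_abs]
  by_cases hxA : x ∈ Icc A B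
  · rw [indicator_of_mem hxA]
    exact hε x
  · rw [indicator_of_notMem hxA, Function.notMem_support.1 fun hx => hxA (hf hx), abs_zero]

lemma integrable_of_isTest (hf : IsTest f) : Integrable (fun x => (f x : ℂ) * μ.dir x) μ.var := by
  obtain ⟨a, b, ha, -, hab⟩ := hf.exists_support_subset_Icc
  obtain ⟨M, hM⟩ := hf.1.bounded_above_of_compact_support hf.2.1
  refine (μ.integrable_indicator_const ha M).mono' ?_ (μ.ae_norm_le_indicator hab hM)
  exact ((Complex.measurable_ofReal.comp hf.1.measurable).mul μ.measurable_dir).aestronglyMeasurable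

lemma norm_testInt_le (hA : 0 < A) (hf : Function.support f ⊆ Icc A B) (hε : ∀ y, |f y| ≤ ε) :
    ‖μ.testInt f‖ ≤ ε * μ.var.real (Icc A B) :=
  calc ‖μ.testInt f‖ ≤ ∫ x, (Icc A B).indicator (fun _ => ε) x ∂μ.var :=
        norm_integral_le_of_norm_le (μ.integrable_indicator_const hA ε)
          (μ.ae_norm_le_indicator hf hε)
    _ = ε * μ.var.real (Icc A B) := by
        rw [integral_indicator_const ε measurableSet_Icc, smul_eq_mul, mul_comm]

lemma testInt_sub (hf : IsTest f) (hg : IsTest g) :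
    μ.testInt (fun x => f x - g x) = μ.testInt f - μ.testInt g := by
  simp only [testInt, Complex.ofReal_sub, sub_mul]
  exact integral_sub (μ.integrable_of_isTest hf) (μ.integrable_of_isTest hg)

end RadonC

lemma scaledTestInt_mul (ρ : ℝ → ℝ) (μ : RadonC) (f : ℝ → ℝ) (s : ℝ) {t : ℝ} (ht : 0 < t) :
    scaledTestInt ρ μ (s * t) f
      = ((V ρ (s * t) / V ρ t : ℝ) : ℂ)⁻¹ * scaledTestInt ρ μ t (fun y => f (y / s)) := by
  have hV : (V ρ t : ℂ) ≠ 0 := Complex.ofReal_ne_zero.2 (Real.rpow_pos_of_pos ht _).ne'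
  simp only [scaledTestInt, div_div, mul_comm t s, Complex.ofReal_div]
  field_simp

namespace MemMInfty

variable {ρ : ℝ → ℝ} {l : ℝ} {μ : RadonC} {α : Type*} {L : Filter α} {t : α → ℝ}

lemma exists_var_Icc_exp_one_mul_le (hμ : MemMInfty ρ μ) (h : IsProximateOrder ρ l)
    (ht : Tendsto t L atTop) {c : ℝ} (hc : 0 < c) :
    ∃ C : ℝ≥0, ∀ᶠ n in L,
      μ.var (Icc (c * t n) (Real.exp 1 * (c * t n))) ≤ C * ENNReal.ofReal (V ρ (t n)) := by
  obtain ⟨C₀, hC₀⟩ := hμ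
  refine ⟨Real.toNNReal (max C₀ 0 * (c ^ l + 1)), ?_⟩
  filter_upwards [(h.tendsto_V_mul_div ht tendsto_const_nhds hc).eventually
      (gt_mem_nhds (lt_add_one (c ^ l))),
    (ht.const_mul_atTop hc).eventually_ge_atTop 1, ht.eventually_gt_atTop 0] with n hV hct htn
  have hVc : V ρ (c * t n) ≤ (c ^ l + 1) * V ρ (t n) :=
    ((div_lt_iff₀ (Real.rpow_pos_of_pos htn _)).1 hV).le
  calc μ.var (Icc (c * t n) (Real.exp 1 * (c * t n))) ≤ ENNReal.ofReal (C₀ * V ρ (c * t n)) :=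
        hC₀ _ hct
    _ ≤ ENNReal.ofReal (max C₀ 0 * (c ^ l + 1) * V ρ (t n)) := by
        rw [mul_assoc]
        exact ENNReal.ofReal_le_ofReal (mul_le_mul (le_max_left _ _) hVc
          (Real.rpow_pos_of_pos (by positivity) _).le (le_max_right _ _))
    _ = Real.toNNReal (max C₀ 0 * (c ^ l + 1)) * ENNReal.ofReal (V ρ (t n)) :=
        ENNReal.ofReal_mul (by positivity)

lemma exists_var_Icc_exp_mul_le (hμ : MemMInfty ρ μ) (h : IsProximateOrder ρ l)
    (ht : Tendsto t L atTop) {a : ℝ} (ha : 0 < a) (k : ℕ) :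
    ∃ C : ℝ≥0, ∀ᶠ n in L,
      μ.var (Icc (a * t n) (Real.exp k * a * t n)) ≤ C * ENNReal.ofReal (V ρ (t n)) := by
  induction k with
  | zero =>
    obtain ⟨C, hC⟩ := hμ.exists_var_Icc_exp_one_mul_le h ht ha
    refine ⟨C, ?_⟩
    filter_upwards [hC, ht.eventually_ge_atTop 0] with n hn htn
    refine (measure_mono (Icc_subset_Icc_right ?_)).trans hn
    rw [Nat.cast_zero, Real.exp_zero, one_mul]
    exact le_mul_of_one_le_left (by positivity) (Real.one_le_exp zero_le_one)
  | succ k ih =>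
    obtain ⟨C₁, hC₁⟩ := ih
    obtain ⟨C₂, hC₂⟩ :=
      hμ.exists_var_Icc_exp_one_mul_le h ht (c := Real.exp k * a) (by positivity)
    refine ⟨C₁ + C₂, ?_⟩
    filter_upwards [hC₁, hC₂] with n h₁ h₂
    set r := Real.exp k * a * t n
    have hsplit : Real.exp ((k + 1 : ℕ) : ℝ) * a * t n = Real.exp 1 * r := by
      rw [Nat.cast_succ, Real.exp_add]; ring
    calc μ.var (Icc (a * t n) (Real.exp ((k + 1 : ℕ) : ℝ) * a * t n))
        ≤ μ.var (Icc (a * t n) r) + μ.var (Icc r (Real.exp 1 * r)) := by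
          rw [hsplit]
          exact (measure_mono Icc_subset_Icc_union_Icc).trans (measure_union_le _ _)
      _ ≤ C₁ * ENNReal.ofReal (V ρ (t n)) + C₂ * ENNReal.ofReal (V ρ (t n)) := add_le_add h₁ h₂
      _ = ↑(C₁ + C₂) * ENNReal.ofReal (V ρ (t n)) := by push_cast; ring

lemma exists_var_Icc_le (hμ : MemMInfty ρ μ) (h : IsProximateOrder ρ l)
    (ht : Tendsto t L atTop) {a : ℝ} (ha : 0 < a) (b : ℝ) :
    ∃ C : ℝ≥0, ∀ᶠ n in L,
      μ.var (Icc (a * t n) (b * t n)) ≤ C * ENNReal.ofReal (V ρ (t n)) := by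
  obtain ⟨k, hk⟩ := exists_nat_ge (b / a)
  obtain ⟨C, hC⟩ := hμ.exists_var_Icc_exp_mul_le h ht ha k
  refine ⟨C, ?_⟩
  filter_upwards [hC, ht.eventually_ge_atTop 0] with n hn htn
  refine (measure_mono (Icc_subset_Icc_right ?_)).trans hn
  have hb : b ≤ Real.exp k * a := by
    rw [div_le_iff₀ ha] at hk
    nlinarith [Real.add_one_le_exp (k : ℝ)]
  exact mul_le_mul_of_nonneg_right hb htn

end MemMInfty

lemma tendsto_scaledTestInt_sub_of_tendstoUniformly {ρ : ℝ → ℝ} {l : ℝ} {μ : RadonC}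
    {α : Type*} {L : Filter α} {t : α → ℝ} (h : IsProximateOrder ρ l) (hμ : MemMInfty ρ μ)
    (ht : Tendsto t L atTop) {F : α → ℝ → ℝ} {G : ℝ → ℝ} {A B : ℝ} (hA : 0 < A)
    (hF : ∀ᶠ n in L, IsTest (F n) ∧ Function.support (F n) ⊆ Icc A B) (hG : IsTest G)
    (hGs : Function.support G ⊆ Icc A B) (hFG : TendstoUniformly F G L) :
    Tendsto (fun n => scaledTestInt ρ μ (t n) (F n) - scaledTestInt ρ μ (t n) G) L (𝓝 0) := by
  obtain ⟨C, hC⟩ := hμ.exists_var_Icc_le h ht hA B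
  refine tendsto_zero_of_eventually_norm_le_mul C fun ε hε => ?_
  filter_upwards [hF, hC, ht.eventually_gt_atTop 0, Metric.tendstoUniformly_iff.1 hFG ε hε]
    with n ⟨hFn, hFs⟩ hCn htn hFGn
  have hV : 0 < V ρ (t n) := Real.rpow_pos_of_pos htn _
  have hsupp : Function.support (fun y => F n y - G y) ⊆ Icc A B :=
    (Function.support_sub _ _).trans (union_subset hFs hGs)
  have hclose : ∀ y, |F n y - G y| ≤ ε := fun y => by
    rw [abs_sub_comm, ← Real.dist_eq]
    exact (hFGn y).le
  have hmass : μ.var.real (Icc (A * t n) (B * t n)) ≤ C * V ρ (t n) := by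
    rw [measureReal_def]
    simpa [ENNReal.toReal_mul, hV.le] using ENNReal.toReal_mono (by finiteness) hCn
  calc ‖scaledTestInt ρ μ (t n) (F n) - scaledTestInt ρ μ (t n) G‖
      = (V ρ (t n))⁻¹ * ‖μ.testInt (fun x => F n (x / t n) - G (x / t n))‖ := by
        rw [scaledTestInt, scaledTestInt, ← mul_sub, μ.testInt_sub (hFn.comp_div htn)
          (hG.comp_div htn), norm_mul, norm_inv, Complex.norm_real, Real.norm_of_nonneg hV.le]
        rfl
    _ ≤ (V ρ (t n))⁻¹ * (ε * μ.var.real (Icc (A * t n) (B * t n))) := by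
        gcongr
        exact μ.norm_testInt_le (by positivity) (support_comp_div_subset_Icc htn hsupp)
          fun y => hclose (y / t n)
    _ ≤ (V ρ (t n))⁻¹ * (ε * (C * V ρ (t n))) := by gcongr
    _ = C * ε := by field_simp

/-- Theorem 3.13: if `μ ∈ 𝔐_∞(ρ)`, `tₙ → ∞`, `μ_{tₙ} → ν`
widely, and `τₙ → τ > 0`, then `μ_{τₙ tₙ} → ν_τ` widely, where
`ν_τ(E) = ν(τE)/τ^{ρ∞}` (so `∫ f dν_τ = τ^{-ρ∞} ∫ f(x/τ) dν(x)`). -/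
theorem statement6 (ρ : ℝ → ℝ) (l : ℝ) (h : IsProximateOrder ρ l)
    (μ : RadonC) (hμ : MemMInfty ρ μ)
    (t : ℕ → ℝ) (ht : Filter.Tendsto t Filter.atTop Filter.atTop)
    (ν : RadonC) (hw : WideTendsto ρ μ t ν)
    (τ : ℕ → ℝ) (τ₀ : ℝ) (hτ₀ : 0 < τ₀)
    (hτ : Filter.Tendsto τ Filter.atTop (nhds τ₀)) :
    ∀ f : ℝ → ℝ, IsTest f →
      Filter.Tendsto (fun n => scaledTestInt ρ μ (τ n * t n) f) Filter.atTop
        (nhds (((τ₀ ^ l : ℝ) : ℂ)⁻¹ * ν.testInt (fun x => f (x / τ₀)))) := by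
  intro f hf
  obtain ⟨a, b, ha, hab, hfs⟩ := hf.exists_support_subset_Icc
  have hτ_mem : ∀ᶠ n in atTop, τ n ∈ Ioo (τ₀ / 2) (2 * τ₀) :=
    hτ.eventually (Ioo_mem_nhds (half_lt_self hτ₀) (by linarith))
  have hsupp : ∀ s ∈ Ioo (τ₀ / 2) (2 * τ₀),
      Function.support (fun y => f (y / s)) ⊆ Icc (a * (τ₀ / 2)) (b * (2 * τ₀)) :=
    fun s hs => (support_comp_div_subset_Icc (by linarith [hs.1]) hfs).trans
      (Icc_subset_Icc (mul_le_mul_of_nonneg_left hs.1.le ha.le)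
        (mul_le_mul_of_nonneg_left hs.2.le (ha.le.trans hab)))
  have hrescaled : Tendsto (fun n => scaledTestInt ρ μ (t n) (fun y => f (y / τ n))) atTop
      (𝓝 (ν.testInt fun y => f (y / τ₀))) := by
    simpa using (tendsto_scaledTestInt_sub_of_tendstoUniformly h hμ ht (by positivity)
      (hτ_mem.mono fun n hn => ⟨hf.comp_div (by linarith [hn.1]), hsupp _ hn⟩)
      (hf.comp_div hτ₀) (hsupp τ₀ ⟨half_lt_self hτ₀, by linarith⟩)
      (hf.2.1.tendstoUniformly_comp_div hf.1 hτ hτ₀)).add (hw _ (hf.comp_div hτ₀))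
  have hratio : Tendsto (fun n => ((V ρ (τ n * t n) / V ρ (t n) : ℝ) : ℂ)⁻¹) atTop
      (𝓝 ((τ₀ ^ l : ℝ) : ℂ)⁻¹) :=
    (h.tendsto_V_mul_div ht hτ hτ₀).ofReal.inv₀
      (Complex.ofReal_ne_zero.2 (Real.rpow_pos_of_pos hτ₀ l).ne')
  refine (hratio.mul hrescaled).congr' ?_
  filter_upwards [ht.eventually_gt_atTop 0] with n htn
  exact (scaledTestInt_mul ρ μ f (τ n) htn).symm

end
end
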